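/- Let m, n be positive integers, r = min(m,n), let L be any function from the real m×n matrices to ℝ, and let λ ≥ 0. Then the infimum over all real m×n matrices Z of L(Z) + λ‖Z‖_* equals the infimum, over all tuples (d, α, β) with d ∈ ℝ^r, d_k ≥ 0, α_k ∈ ℝ^m, ‖α_k‖₂ ≤ 1, β_k ∈ ℝ^n, ‖β_k‖₂ ≤ 1 for all k ∈ {1,…,r}, of L(Σ_{k=1}^r d_k α_k β_kᵀ) + λ·Σ_{k=1}^r d_k. (Generalization of Theorem 1 to an arbitrary loss, Remark 2.) -/

import Mathlib

/-!
Let `(vⱼ)` be an orthonormal eigenbasis of `WᵀW` with eigenvalues `σⱼ²`, and `uⱼ = σⱼ⁻¹ W vⱼ`;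
the `uⱼ` with `σⱼ ≠ 0` are orthonormal and `W = ∑ⱼ σⱼ uⱼ vⱼᵀ`, a feasible point of the relaxed
problem with `∑ⱼ σⱼ = ‖W‖_*`. Conversely `‖W‖_* = ∑ⱼ ⟪uⱼ, W vⱼ⟫`, which for `W = ∑ₖ dₖ αₖ βₖᵀ`
Cauchy–Schwarz and Bessel's inequality bound by `∑ₖ dₖ ‖αₖ‖ ‖βₖ‖ ≤ ∑ₖ dₖ`. Applied to the
transposed decomposition, this bound gives `‖Wᵀ‖_* = ‖W‖_*`, so `min m n` terms suffice. Hence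
each value of either problem is dominated by a value of the other, and the infima agree.
-/

open scoped BigOperators

/-- The nuclear norm of a real matrix: the sum of the square roots of the
eigenvalues of `Zᵀ * Z` (i.e. the sum of the singular values of `Z`). -/
noncomputable def nuclearNorm {m n : ℕ} (Z : Matrix (Fin m) (Fin n) ℝ) : ℝ :=
  ∑ j, Real.sqrt ((show (Z.transpose * Z).IsHermitian by
    simpa using Matrix.isHermitian_conjTranspose_mul_self Z).eigenvalues j)

/-- The Euclidean (ℓ²) norm of a vector in `ℝ^m`. -/
noncomputable def l2norm {m : ℕ} (x : Fin m → ℝ) : ℝ := Real.sqrt (∑ i, x i ^ 2)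

/-- `∑ k, d k • (α k) (β k)ᵀ`, a sum of scaled rank-one matrices. -/
noncomputable def rankOneSum {m n r : ℕ} (d : Fin r → ℝ) (α : Fin r → Fin m → ℝ)
    (β : Fin r → Fin n → ℝ) : Matrix (Fin m) (Fin n) ℝ :=
  ∑ k, d k • Matrix.vecMulVec (α k) (β k)

open Matrix Finset
open scoped RealInnerProductSpace

section Bessel

variable {ι E F : Type*} [Fintype ι] [NormedAddCommGroup E] [InnerProductSpace ℝ E]
  [NormedAddCommGroup F] [InnerProductSpace ℝ F]

lemma Orthonormal.sqrt_sum_sq_inner_le {u : ι → E} (hu : Orthonormal ℝ u) (a : E) :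
    √(∑ i, ⟪u i, a⟫ ^ 2) ≤ ‖a‖ :=
  Real.sqrt_le_iff.mpr
    ⟨norm_nonneg a, by simpa only [Real.norm_eq_abs, sq_abs] using hu.sum_inner_products_le a⟩

lemma Orthonormal.sum_inner_mul_inner_le {u : ι → E} {v : ι → F} (hu : Orthonormal ℝ u)
    (hv : Orthonormal ℝ v) (a : E) (b : F) :
    ∑ i, ⟪u i, a⟫ * ⟪v i, b⟫ ≤ ‖a‖ * ‖b‖ :=
  (Real.sum_mul_le_sqrt_mul_sqrt _ _ _).trans <|
    mul_le_mul (hu.sqrt_sum_sq_inner_le a) (hv.sqrt_sum_sq_inner_le b) (Real.sqrt_nonneg _)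
      (norm_nonneg a)

end Bessel

lemma l2norm_eq_norm_toLp {m : ℕ} (x : Fin m → ℝ) : l2norm x = ‖WithLp.toLp 2 x‖ := by
  simp [l2norm, EuclideanSpace.norm_eq]

section RankOneSum

variable {m n r : ℕ} (d : Fin r → ℝ) (α : Fin r → Fin m → ℝ) (β : Fin r → Fin n → ℝ)

lemma rankOneSum_mulVec (x : Fin n → ℝ) :
    rankOneSum d α β *ᵥ x = ∑ k, (d k * (β k ⬝ᵥ x)) • α k := by
  simp only [rankOneSum, sum_mulVec, smul_mulVec, vecMulVec_mulVec, op_smul_eq_smul, mul_smul]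

lemma rankOneSum_transpose : (rankOneSum d α β)ᵀ = rankOneSum d β α := by
  simp [rankOneSum, transpose_sum, transpose_vecMulVec]

lemma inner_toLp_rankOneSum_mulVec (u : EuclideanSpace ℝ (Fin m))
    (v : EuclideanSpace ℝ (Fin n)) :
    ⟪u, WithLp.toLp 2 (rankOneSum d α β *ᵥ v)⟫
      = ∑ k, d k * (⟪u, WithLp.toLp 2 (α k)⟫ * ⟪v, WithLp.toLp 2 (β k)⟫) := by
  simp only [rankOneSum_mulVec, WithLp.toLp_sum, WithLp.toLp_smul, inner_sum,
    real_inner_smul_right]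
  simp only [EuclideanSpace.inner_eq_star_dotProduct, star_trivial, dotProduct_comm (β _)]
  exact sum_congr rfl fun k _ ↦ by ring

end RankOneSum

namespace Matrix

variable {m n : ℕ} (W : Matrix (Fin m) (Fin n) ℝ)

noncomputable def rightSingularBasis :
    OrthonormalBasis (Fin n) ℝ (EuclideanSpace ℝ (Fin n)) :=
  (isHermitian_conjTranspose_mul_self W).eigenvectorBasis

noncomputable def singularValue (j : Fin n) : ℝ :=
  √((isHermitian_conjTranspose_mul_self W).eigenvalues j)

/-- The junk value `0⁻¹ = 0` makes this `0` when `σⱼ = 0`. -/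
noncomputable def leftSingularVector (j : Fin n) : EuclideanSpace ℝ (Fin m) :=
  (W.singularValue j)⁻¹ • WithLp.toLp 2 (W *ᵥ W.rightSingularBasis j)

lemma singularValue_nonneg (j : Fin n) : 0 ≤ W.singularValue j := Real.sqrt_nonneg _

lemma nuclearNorm_eq_sum_singularValue : nuclearNorm W = ∑ j, W.singularValue j := rfl

lemma inner_toLp_mulVec_rightSingularBasis (j k : Fin n) :
    ⟪WithLp.toLp 2 (W *ᵥ W.rightSingularBasis j), WithLp.toLp 2 (W *ᵥ W.rightSingularBasis k)⟫
      = if j = k then W.singularValue j ^ 2 else 0 := by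
  have hW := isHermitian_conjTranspose_mul_self W
  calc _ = W.rightSingularBasis j ⬝ᵥ ((Wᴴ * W) *ᵥ W.rightSingularBasis k) := by
        simp [EuclideanSpace.inner_eq_star_dotProduct, ← mulVec_mulVec,
          dotProduct_transpose_mulVec]
    _ = hW.eigenvalues k * ⟪W.rightSingularBasis j, W.rightSingularBasis k⟫ := by
        rw [rightSingularBasis, hW.mulVec_eigenvectorBasis, dotProduct_smul,
          smul_eq_mul, EuclideanSpace.inner_eq_star_dotProduct, star_trivial, dotProduct_comm]
    _ = _ := by
        rw [orthonormal_iff_ite.mp W.rightSingularBasis.orthonormal]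
        split_ifs with h
        · subst h
          rw [singularValue, Real.sq_sqrt (eigenvalues_conjTranspose_mul_self_nonneg W j), mul_one]
        · rw [mul_zero]

lemma toLp_mulVec_rightSingularBasis (j : Fin n) :
    WithLp.toLp 2 (W *ᵥ W.rightSingularBasis j) = W.singularValue j • W.leftSingularVector j := by
  by_cases h : W.singularValue j = 0
  · have := W.inner_toLp_mulVec_rightSingularBasis j j
    simp_all
  · rw [leftSingularVector, smul_inv_smul₀ h]

lemma orthonormal_leftSingularVector :
    Orthonormal ℝ fun j : {j // W.singularValue j ≠ 0} ↦ W.leftSingularVector j := by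
  rw [orthonormal_iff_ite]
  rintro ⟨j, hj⟩ ⟨k, hk⟩
  simp only [leftSingularVector, real_inner_smul_left, real_inner_smul_right,
    inner_toLp_mulVec_rightSingularBasis, Subtype.mk.injEq]
  split_ifs with h
  · subst h
    field_simp
  · simp

lemma norm_leftSingularVector_le_one (j : Fin n) : ‖W.leftSingularVector j‖ ≤ 1 := by
  by_cases h : W.singularValue j = 0
  · simp [leftSingularVector, h]
  · exact (W.orthonormal_leftSingularVector.1 ⟨j, h⟩).le

lemma rankOneSum_singularValue :
    rankOneSum W.singularValue (fun j ↦ W.leftSingularVector j) (fun j ↦ W.rightSingularBasis j)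
      = W := by
  set v := W.rightSingularBasis
  have expand (x : Fin n → ℝ) : ∑ j, (v j ⬝ᵥ x) • ⇑(v j) = x := by
    simpa [EuclideanSpace.inner_eq_star_dotProduct, dotProduct_comm] using
      congrArg WithLp.ofLp (v.sum_repr' (WithLp.toLp 2 x))
  have mulVec_eq (j : Fin n) : W.singularValue j • ⇑(W.leftSingularVector j) = W *ᵥ v j := by
    rw [← WithLp.ofLp_smul, ← toLp_mulVec_rightSingularBasis]
  refine ext_of_mulVec_single fun i ↦ ?_
  calc _ = ∑ j, (v j ⬝ᵥ Pi.single i 1) • (W.singularValue j • ⇑(W.leftSingularVector j)) := by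
        simp only [rankOneSum_mulVec, mul_smul]
        exact sum_congr rfl fun j _ ↦ smul_comm _ _ _
    _ = W *ᵥ ∑ j, (v j ⬝ᵥ Pi.single i 1) • ⇑(v j) := by
        simp only [mulVec_eq, mulVec_sum, mulVec_smul]
    _ = _ := by rw [expand]

lemma nuclearNorm_eq_sum_inner : nuclearNorm W = ∑ j : {j // W.singularValue j ≠ 0},
    ⟪W.leftSingularVector j, WithLp.toLp 2 (W *ᵥ W.rightSingularBasis j)⟫ := by
  rw [nuclearNorm_eq_sum_singularValue, ← sum_filter_ne_zero,
    sum_subtype (p := (W.singularValue · ≠ 0)) _ (fun j ↦ by simp)]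
  refine sum_congr rfl fun j _ ↦ ?_
  rw [toLp_mulVec_rightSingularBasis, real_inner_smul_right, real_inner_self_eq_norm_sq,
    (W.orthonormal_leftSingularVector.1 j), one_pow, mul_one]

end Matrix

lemma nuclearNorm_rankOneSum_le {m n r : ℕ} {d : Fin r → ℝ} {α : Fin r → Fin m → ℝ}
    {β : Fin r → Fin n → ℝ} (hd : ∀ k, 0 ≤ d k) (hα : ∀ k, l2norm (α k) ≤ 1)
    (hβ : ∀ k, l2norm (β k) ≤ 1) :
    nuclearNorm (rankOneSum d α β) ≤ ∑ k, d k := by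
  set W := rankOneSum d α β with hW
  have hu := W.orthonormal_leftSingularVector
  have hv := W.rightSingularBasis.orthonormal.comp _
    (Subtype.val_injective (p := (W.singularValue · ≠ 0)))
  calc nuclearNorm W
      = ∑ k, d k * ∑ j : {j // W.singularValue j ≠ 0},
          ⟪W.leftSingularVector j, WithLp.toLp 2 (α k)⟫
            * ⟪W.rightSingularBasis j, WithLp.toLp 2 (β k)⟫ := by
        rw [W.nuclearNorm_eq_sum_inner]
        simp only [hW, inner_toLp_rankOneSum_mulVec, mul_sum]
        exact sum_comm
    _ ≤ ∑ k, d k * (‖WithLp.toLp 2 (α k)‖ * ‖WithLp.toLp 2 (β k)‖) := by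
        gcongr with k
        · exact hd k
        · exact hu.sum_inner_mul_inner_le hv _ _
    _ ≤ ∑ k, d k := sum_le_sum fun k _ ↦ mul_le_of_le_one_right (hd k) <|
        mul_le_one₀ (l2norm_eq_norm_toLp (α k) ▸ hα k) (norm_nonneg _)
          (l2norm_eq_norm_toLp (β k) ▸ hβ k)

section Decomposition

variable {m n : ℕ}

lemma exists_rankOneSum_eq_nuclearNorm (W : Matrix (Fin m) (Fin n) ℝ) :
    ∃ (d : Fin n → ℝ) (α : Fin n → Fin m → ℝ) (β : Fin n → Fin n → ℝ),
      (∀ k, 0 ≤ d k) ∧ (∀ k, l2norm (α k) ≤ 1) ∧ (∀ k, l2norm (β k) ≤ 1) ∧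
      rankOneSum d α β = W ∧ ∑ k, d k = nuclearNorm W :=
  ⟨W.singularValue, fun j ↦ W.leftSingularVector j, fun j ↦ W.rightSingularBasis j,
    W.singularValue_nonneg,
    fun j ↦ (l2norm_eq_norm_toLp _).trans_le (W.norm_leftSingularVector_le_one j),
    fun j ↦ (l2norm_eq_norm_toLp _).trans_le (W.rightSingularBasis.orthonormal.1 j).le,
    W.rankOneSum_singularValue, W.nuclearNorm_eq_sum_singularValue.symm⟩

lemma nuclearNorm_transpose_le (W : Matrix (Fin m) (Fin n) ℝ) :
    nuclearNorm Wᵀ ≤ nuclearNorm W := by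
  obtain ⟨d, α, β, hd, hα, hβ, rfl, hsum⟩ := exists_rankOneSum_eq_nuclearNorm W
  rw [rankOneSum_transpose, ← hsum]
  exact nuclearNorm_rankOneSum_le hd hβ hα

lemma nuclearNorm_transpose (W : Matrix (Fin m) (Fin n) ℝ) : nuclearNorm Wᵀ = nuclearNorm W :=
  (nuclearNorm_transpose_le W).antisymm (by simpa using nuclearNorm_transpose_le Wᵀ)

lemma exists_rankOneSum_min_eq_nuclearNorm (W : Matrix (Fin m) (Fin n) ℝ) :
    ∃ (d : Fin (min m n) → ℝ) (α : Fin (min m n) → Fin m → ℝ) (β : Fin (min m n) → Fin n → ℝ),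
      (∀ k, 0 ≤ d k) ∧ (∀ k, l2norm (α k) ≤ 1) ∧ (∀ k, l2norm (β k) ≤ 1) ∧
      rankOneSum d α β = W ∧ ∑ k, d k = nuclearNorm W := by
  rcases le_total n m with h | h
  · rw [min_eq_right h]
    exact exists_rankOneSum_eq_nuclearNorm W
  · rw [min_eq_left h]
    obtain ⟨d, α, β, hd, hα, hβ, hW, hsum⟩ := exists_rankOneSum_eq_nuclearNorm Wᵀ
    refine ⟨d, β, α, hd, hβ, hα, ?_, by rw [hsum, nuclearNorm_transpose]⟩
    rw [← rankOneSum_transpose, hW, transpose_transpose]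

end Decomposition

theorem relaxed_spectral_regularization_general_loss_general
    (m n : ℕ) (r : ℕ) (hr : r = min m n)
    (L : Matrix (Fin m) (Fin n) ℝ → ℝ) (lam : ℝ) (hlam : 0 ≤ lam) :
    sInf {v : ℝ | ∃ Z : Matrix (Fin m) (Fin n) ℝ, v = L Z + lam * nuclearNorm Z}
    = sInf {v : ℝ | ∃ (d : Fin r → ℝ) (α : Fin r → Fin m → ℝ) (β : Fin r → Fin n → ℝ),
        (∀ k, 0 ≤ d k) ∧ (∀ k, l2norm (α k) ≤ 1) ∧ (∀ k, l2norm (β k) ≤ 1) ∧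
        v = L (rankOneSum d α β) + lam * ∑ k, d k} := by
  subst hr
  apply csInf_eq_csInf_of_forall_exists_le
  · rintro _ ⟨Z, rfl⟩
    obtain ⟨d, α, β, hd, hα, hβ, hZ, hsum⟩ := exists_rankOneSum_min_eq_nuclearNorm Z
    exact ⟨_, ⟨d, α, β, hd, hα, hβ, rfl⟩, by rw [hZ, hsum]⟩
  · rintro _ ⟨d, α, β, hd, hα, hβ, rfl⟩
    exact ⟨_, ⟨rankOneSum d α β, rfl⟩,
      add_le_add_right (mul_le_mul_of_nonneg_left (nuclearNorm_rankOneSum_le hd hα hβ) hlam) _⟩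

theorem relaxed_spectral_regularization_general_loss
    (m n : ℕ) (hm : 0 < m) (hn : 0 < n) (r : ℕ) (hr : r = min m n)
    (L : Matrix (Fin m) (Fin n) ℝ → ℝ) (lam : ℝ) (hlam : 0 ≤ lam) :
    sInf {v : ℝ | ∃ Z : Matrix (Fin m) (Fin n) ℝ, v = L Z + lam * nuclearNorm Z}
    = sInf {v : ℝ | ∃ (d : Fin r → ℝ) (α : Fin r → Fin m → ℝ) (β : Fin r → Fin n → ℝ),
        (∀ k, 0 ≤ d k) ∧ (∀ k, l2norm (α k) ≤ 1) ∧ (∀ k, l2norm (β k) ≤ 1) ∧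
        v = L (rankOneSum d α β) + lam * ∑ k, d k} :=
  relaxed_spectral_regularization_general_loss_general m n r hr L lam hlam
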